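/- Let μ be an integer-valued random measure with compensator ν and let W be a predictable random field with E[∫_{]0,T]×ℝ} |W_s(e)|² ν(ds de)] < ∞ (W ∈ L²(μ)). Then W ∈ G²(μ) and ‖W‖²_{G²(μ)} ≤ ‖W‖²_{L²(μ)}, where ‖W‖²_{G²(μ)} = E[C(W)_T] with C(W) = |W − Ŵ 1_J|² ⋆ ν + ∑_{s≤·} (1 − ν̂_s(ℝ)) |Ŵ_s|² 1_{J\K}(s). -/

import Mathlib

open MeasureTheory Filter Set Function
open scoped ENNReal

noncomputable section

variable {Ω : Type*}

/-- A real function is càdlàg: right-continuous with finite left limits. -/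
def IsCadlag (f : ℝ → ℝ) : Prop :=
  (∀ t : ℝ, ContinuousWithinAt f (Ici t) t) ∧
  (∀ t : ℝ, ∃ l : ℝ, Tendsto f (nhdsWithin t (Iio t)) (nhds l))

/-- Jump of a process at time `t`: `ΔX_t = X_t - X_{t-}`. -/
def jumpOf (X : ℝ → Ω → ℝ) (t : ℝ) (ω : Ω) : ℝ :=
  X t ω - Function.leftLim (fun s => X s ω) t

/-- Sum over the jump times of `X` in `(0,t]` of `g(s, X_{s-}, ΔX_s)`, i.e. the
integral of `g` against the jump measure `μ^X`, as an `ℝ≥0∞`-valued process. -/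
def jumpSum (X : ℝ → Ω → ℝ) (g : ℝ → ℝ → ℝ → ℝ) (t : ℝ) (ω : Ω) : ℝ≥0∞ :=
  ∑' s : {s : ℝ // s ∈ Ioc (0:ℝ) t ∧ jumpOf X s ω ≠ 0},
    ENNReal.ofReal (g (s : ℝ) (Function.leftLim (fun u => X u ω) (s : ℝ)) (jumpOf X (s : ℝ) ω))

/-- Local martingale: there is a localizing sequence of stopping times. -/
def IsLocalMartingale {m : MeasurableSpace Ω} (F : Filtration ℝ m) (P : Measure Ω)
    (M : ℝ → Ω → ℝ) : Prop :=
  ∃ τ : ℕ → Ω → ℝ,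
    (∀ n, IsStoppingTime F (fun ω => ((τ n ω : ℝ) : WithTop ℝ))) ∧
    (∀ ω, Tendsto (fun n => τ n ω) atTop atTop) ∧
    (∀ n, Martingale (fun t ω => M (min t (τ n ω)) ω) F P)

/-- Generators of the predictable σ-field: `{0} × A₀` and `(s,t] × A_s`. -/
def predictableRectangles {m : MeasurableSpace Ω} (F : Filtration ℝ m) : Set (Set (ℝ × Ω)) :=
  {S | ∃ s t : ℝ, ∃ A : Set Ω, MeasurableSet[F s] A ∧ S = Ioc s t ×ˢ A} ∪
  {S | ∃ A : Set Ω, MeasurableSet[F 0] A ∧ S = {(0:ℝ)} ×ˢ A}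

/-- The predictable σ-field on `ℝ × Ω`. -/
def predictableSigma {m : MeasurableSpace Ω} (F : Filtration ℝ m) : MeasurableSpace (ℝ × Ω) :=
  MeasurableSpace.generateFrom (predictableRectangles F)

/-- A predictable process. -/
def PredictableProcess {m : MeasurableSpace Ω} (F : Filtration ℝ m) (M : ℝ → Ω → ℝ) : Prop :=
  @Measurable (ℝ × Ω) ℝ (predictableSigma F) _ (fun p => M p.1 p.2)

/-- A predictable random set. -/
def PredictableSet {m : MeasurableSpace Ω} (F : Filtration ℝ m) (S : Set (ℝ × Ω)) : Prop :=
  MeasurableSet[predictableSigma F] S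

/-- A predictable random field `W_s(e)(ω)`, measurable for the σ-field `𝒫 ⊗ B(ℝ)`. -/
def PredictableField {m : MeasurableSpace Ω} (F : Filtration ℝ m)
    (W : ℝ → ℝ → Ω → ℝ) : Prop :=
  @Measurable ((ℝ × Ω) × ℝ) ℝ ((predictableSigma F).prod (inferInstance : MeasurableSpace ℝ)) _
    (fun p => W p.1.1 p.2 p.1.2)

/-- A predictable time: a stopping time admitting an announcing sequence. -/
def IsPredictableTime {m : MeasurableSpace Ω} (F : Filtration ℝ m) (S : Ω → ℝ) : Prop :=
  IsStoppingTime F (fun ω => ((S ω : ℝ) : WithTop ℝ)) ∧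
  ∃ τ : ℕ → Ω → ℝ,
    (∀ n, IsStoppingTime F (fun ω => ((τ n ω : ℝ) : WithTop ℝ))) ∧
    (∀ n ω, τ n ω ≤ τ (n + 1) ω) ∧
    (∀ ω, Tendsto (fun n => τ n ω) atTop (nhds (S ω))) ∧
    (∀ n ω, 0 < S ω → τ n ω < S ω)

/-- Graph `[[T]]` of a random time (active when `0 < t`). -/
def graphOf (T : Ω → ℝ) : Set (ℝ × Ω) := {p | 0 < p.1 ∧ T p.2 = p.1}

/-- Totally inaccessible time: its graph meets the graph of no predictable time,
up to a null set. -/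
def TotallyInaccessible {m : MeasurableSpace Ω} (F : Filtration ℝ m) (P : Measure Ω)
    (T : Ω → ℝ) : Prop :=
  ∀ S : Ω → ℝ, IsPredictableTime F S → ∀ᵐ ω ∂P, ¬(0 < T ω ∧ T ω = S ω)

/-- An evanescent random set. -/
def Evanescent {m : MeasurableSpace Ω} (P : Measure Ω) (A : Set (ℝ × Ω)) : Prop :=
  ∀ᵐ ω ∂P, ∀ t : ℝ, (t, ω) ∉ A

/-- The class `𝒜⁺_loc` of increasing processes of locally integrable variation. -/
def InAplusLoc {m : MeasurableSpace Ω} (F : Filtration ℝ m) (P : Measure Ω)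
    (A : ℝ → Ω → ℝ≥0∞) : Prop :=
  ∃ τ : ℕ → Ω → ℝ,
    (∀ n, IsStoppingTime F (fun ω => ((τ n ω : ℝ) : WithTop ℝ))) ∧
    (∀ ω, Tendsto (fun n => τ n ω) atTop atTop) ∧
    (∀ n, ∫⁻ ω, A (τ n ω) ω ∂P ≠ ⊤)

/-- Purely discontinuous local martingale / orthogonal process: `[M,N] = 0` for every
continuous local martingale `N`, equivalently `M·N` is a local martingale for every
continuous local martingale `N`. -/
def PurelyDiscontinuous {m : MeasurableSpace Ω} (F : Filtration ℝ m) (P : Measure Ω)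
    (M : ℝ → Ω → ℝ) : Prop :=
  ∀ N : ℝ → Ω → ℝ, IsLocalMartingale F P N → (∀ ω, Continuous fun t => N t ω) →
    IsLocalMartingale F P (fun t ω => M t ω * N t ω)

/-- `v` is of class `C^{0,1}` with spatial derivative `vx`. -/
def IsC01 (v vx : ℝ → ℝ → ℝ) : Prop :=
  Continuous (Function.uncurry v) ∧ Continuous (Function.uncurry vx) ∧
  ∀ s x : ℝ, HasDerivAt (fun y => v s y) (vx s x) x

/-- Total mass of the atom of the random measure `ν` at time `t`: `ν̂_t(ℝ)`. -/
def hatNu (ν : Ω → Measure (ℝ × ℝ)) (t : ℝ) (ω : Ω) : ℝ≥0∞ :=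
  ν ω ({t} ×ˢ (univ : Set ℝ))

/-- The atom measure `ν̂_t(de) = ν({t}, de)`. -/
def hatNuMeasure (ν : Ω → Measure (ℝ × ℝ)) (t : ℝ) (ω : Ω) : Measure ℝ :=
  Measure.map Prod.snd ((ν ω).restrict ({t} ×ˢ (univ : Set ℝ)))

/-- `Ŵ_t = ∫ W_t(e) ν̂_t(de)`. -/
def hatW (ν : Ω → Measure (ℝ × ℝ)) (W : ℝ → ℝ → Ω → ℝ) (t : ℝ) (ω : Ω) : ℝ :=
  ∫ e, W t e ω ∂(hatNuMeasure ν t ω)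

/-- The predictable bracket process
`C(W)_{T'} = |W - Ŵ 1_J|² ⋆ ν_{T'} + ∑_{s ≤ T'} (1 - ν̂_s(ℝ)) |Ŵ_s|² 1_{J \ K}(s)`,
where `J = {ν̂ > 0}` and `K = {ν̂ = 1}`. -/
def CW (ν : Ω → Measure (ℝ × ℝ)) (W : ℝ → ℝ → Ω → ℝ) (T' : ℝ) (ω : Ω) : ℝ≥0∞ :=
  (∫⁻ p in Ioc (0:ℝ) T' ×ˢ (univ : Set ℝ),
      ENNReal.ofReal ((W p.1 p.2 ω -
        (if 0 < hatNu ν p.1 ω then hatW ν W p.1 ω else 0)) ^ 2) ∂(ν ω)) +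
  ∑' s : {s : ℝ // s ∈ Ioc (0:ℝ) T' ∧ 0 < hatNu ν s ω ∧ hatNu ν s ω ≠ 1},
    (1 - hatNu ν (s : ℝ) ω) * ENNReal.ofReal ((hatW ν W (s : ℝ) ω) ^ 2)

/-- `‖W‖²_{L²(μ)} = E ∫_{(0,T']×ℝ} |W_s(e)|² ν(ds de)`. -/
def L2normSq {m : MeasurableSpace Ω} (ν : Ω → Measure (ℝ × ℝ)) (W : ℝ → ℝ → Ω → ℝ)
    (T' : ℝ) (P : Measure Ω) : ℝ≥0∞ :=
  ∫⁻ ω, (∫⁻ p in Ioc (0:ℝ) T' ×ˢ (univ : Set ℝ),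
    ENNReal.ofReal ((W p.1 p.2 ω) ^ 2) ∂(ν ω)) ∂P

/-! The inequality holds pathwise. On a slice `{t} × ℝ`, expanding the square gives
`∫ |W_t - Ŵ_t|² dν̂_t + (1 - ν̂_t(ℝ)) Ŵ_t² = ∫ |W_t|² dν̂_t - Ŵ_t²`, where `ν̂_t(ℝ) ≤ 1` keeps the
truncated difference `1 - ν̂_t(ℝ)` in `ℝ≥0∞` honest. When `∫ |W|² dν` is finite, `Ŵ_t ≠ 0` forces
the slice `{t} × ℝ` to carry positive `|W|² dν`-mass, so `Ŵ` vanishes off a countable set of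
times. Off that set the two integrands agree, and on it we sum the slice inequalities. -/

theorem predictableSigma_le_prod {m : MeasurableSpace Ω} (F : Filtration ℝ m) :
    predictableSigma F ≤ Prod.instMeasurableSpace := by
  refine MeasurableSpace.generateFrom_le ?_
  rintro S (⟨s, t, A, hA, rfl⟩ | ⟨A, hA, rfl⟩)
  · exact measurableSet_Ioc.prod (F.le s A hA)
  · exact (measurableSet_singleton 0).prod (F.le 0 A hA)

theorem PredictableField.measurable_section {m : MeasurableSpace Ω} {F : Filtration ℝ m}
    {W : ℝ → ℝ → Ω → ℝ} (hW : PredictableField F W) (ω : Ω) :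
    Measurable fun p : ℝ × ℝ => W p.1 p.2 ω := by
  have hW' : Measurable fun q : (ℝ × Ω) × ℝ => W q.1.1 q.2 q.1.2 :=
    hW.mono (sup_le_sup (MeasurableSpace.comap_mono (predictableSigma_le_prod F)) le_rfl) le_rfl
  exact hW'.comp ((measurable_fst.prodMk measurable_const).prodMk measurable_snd)

section Slices

variable {α β : Type*} [MeasurableSpace α] [MeasurableSingletonClass α] [MeasurableSpace β]

theorem setLIntegral_singleton_prod_univ (μ : Measure (α × β)) {f : α × β → ℝ≥0∞} (t : α)
    (hf : Measurable fun e => f (t, e)) :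
    ∫⁻ p in {t} ×ˢ univ, f p ∂μ
      = ∫⁻ e, f (t, e) ∂(μ.restrict ({t} ×ˢ univ)).map Prod.snd := by
  rw [lintegral_map hf measurable_snd]
  refine setLIntegral_congr_fun ((measurableSet_singleton t).prod MeasurableSet.univ) ?_
  rintro ⟨s, e⟩ ⟨rfl : s = t, -⟩
  rfl

theorem setLIntegral_prod_univ_eq_tsum_add (μ : Measure (α × β)) (f : α × β → ℝ≥0∞)
    {s N : Set α} (hs : MeasurableSet s) (hN : N.Countable) (hNs : N ⊆ s) :
    ∫⁻ p in s ×ˢ univ, f p ∂μ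
      = (∑' t : N, ∫⁻ p in {(t : α)} ×ˢ univ, f p ∂μ) + ∫⁻ p in (s \ N) ×ˢ univ, f p ∂μ := by
  have : Countable N := hN.to_subtype
  have hslices : N ×ˢ (univ : Set β) = ⋃ t : N, {(t : α)} ×ˢ univ := by
    rw [← iUnion_prod_const, iUnion_of_singleton_coe]
  rw [← union_sdiff_cancel hNs, union_prod, lintegral_union
    ((hs.diff hN.measurableSet).prod MeasurableSet.univ)
    (disjoint_sdiff_right.set_prod_left _ _), union_sdiff_cancel hNs, hslices,
    lintegral_iUnion (fun t => (measurableSet_singleton _).prod MeasurableSet.univ)]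
  · intro t u htu
    exact disjoint_left.2 fun p hpt hpu => htu (Subtype.ext (hpt.1.symm.trans hpu.1))

theorem countable_setOf_setLIntegral_singleton_prod_univ_ne_zero (μ : Measure (α × β))
    (f : α × β → ℝ≥0∞) {s : Set α} (hfin : ∫⁻ p in s ×ˢ univ, f p ∂μ ≠ ⊤) :
    {t ∈ s | ∫⁻ p in {t} ×ˢ univ, f p ∂μ ≠ 0}.Countable := by
  set ρ := (μ.restrict (s ×ˢ univ)).withDensity f
  have hρ : ∀ t ∈ s, ρ ({t} ×ˢ univ) = ∫⁻ p in {t} ×ˢ univ, f p ∂μ := by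
    intro t ht
    rw [withDensity_apply _ ((measurableSet_singleton t).prod MeasurableSet.univ),
      Measure.restrict_restrict ((measurableSet_singleton t).prod MeasurableSet.univ),
      inter_eq_self_of_subset_left (prod_mono (singleton_subset_iff.2 ht) subset_rfl)]
  have hcount := ρ.countable_meas_pos_of_disjoint_of_meas_iUnion_ne_top
    (As := fun t : α => {t} ×ˢ (univ : Set β))
    (fun t => (measurableSet_singleton t).prod MeasurableSet.univ)
    (fun t u htu => disjoint_left.2 fun p hpt hpu => htu (hpt.1.symm.trans hpu.1))
    (ne_top_of_le_ne_top (by rwa [withDensity_apply _ MeasurableSet.univ,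
      Measure.restrict_univ]) (measure_mono (subset_univ _)))
  refine hcount.mono fun t ⟨ht, hne⟩ => ?_
  simpa only [mem_ofPred_eq, hρ t ht, pos_iff_ne_zero] using hne

end Slices

section Variance

variable {α : Type*} [MeasurableSpace α] {ρ : Measure α} [IsFiniteMeasure ρ] {w : α → ℝ}

theorem integral_sub_integral_sq (hw : MemLp w 2 ρ) :
    ∫ e, (w e - ∫ x, w x ∂ρ) ^ 2 ∂ρ
      = ∫ e, w e ^ 2 ∂ρ - (2 - ρ.real univ) * (∫ x, w x ∂ρ) ^ 2 := by
  set a := ∫ x, w x ∂ρ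
  have hw1 : Integrable w ρ := hw.integrable one_le_two
  have hw2 : Integrable (fun e => w e ^ 2 - 2 * a * w e) ρ :=
    hw.integrable_sq.sub (hw1.const_mul _)
  calc ∫ e, (w e - a) ^ 2 ∂ρ = ∫ e, (w e ^ 2 - 2 * a * w e) + a ^ 2 ∂ρ := by
        congr 1 with e; ring
    _ = ∫ e, w e ^ 2 ∂ρ - (2 - ρ.real univ) * a ^ 2 := by
        rw [integral_add hw2 (integrable_const _), integral_sub hw.integrable_sq
          (hw1.const_mul _), integral_const_mul, integral_const, smul_eq_mul]
        ring

theorem lintegral_sub_integral_sq_add_le (hρ : ρ univ ≤ 1) (hw : AEStronglyMeasurable w ρ) :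
    ∫⁻ e, ENNReal.ofReal ((w e - ∫ x, w x ∂ρ) ^ 2) ∂ρ
        + (1 - ρ univ) * ENNReal.ofReal ((∫ x, w x ∂ρ) ^ 2)
      ≤ ∫⁻ e, ENNReal.ofReal (w e ^ 2) ∂ρ := by
  set a := ∫ x, w x ∂ρ
  by_cases hw2 : Integrable (fun e => w e ^ 2) ρ
  swap
  · refine le_of_le_of_eq le_top (Eq.symm ?_)
    by_contra hfin
    exact hw2 ⟨hw.pow 2, (hasFiniteIntegral_iff_ofReal (ae_of_all _ fun e => sq_nonneg _)).2
      (lt_top_iff_ne_top.2 hfin)⟩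
  have hmem : MemLp w 2 ρ := (memLp_two_iff_integrable_sq hw).2 hw2
  have hρ' : ρ.real univ ≤ 1 := by
    rw [measureReal_def]
    simpa using ENNReal.toReal_mono ENNReal.one_ne_top hρ
  have hsub : Integrable (fun e => (w e - a) ^ 2) ρ := (hmem.sub (memLp_const a)).integrable_sq
  have hρ1 : 1 - ρ univ = ENNReal.ofReal (1 - ρ.real univ) := by
    rw [ENNReal.ofReal_sub _ measureReal_nonneg, ENNReal.ofReal_one, ofReal_measureReal]
  rw [← ofReal_integral_eq_lintegral_ofReal hw2 (ae_of_all _ fun e => sq_nonneg _),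
    ← ofReal_integral_eq_lintegral_ofReal hsub (ae_of_all _ fun e => sq_nonneg _), hρ1,
    ← ENNReal.ofReal_mul (by linarith),
    ← ENNReal.ofReal_add (integral_nonneg fun e => sq_nonneg _) (by positivity),
    integral_sub_integral_sq hmem]
  exact ENNReal.ofReal_le_ofReal (by nlinarith [sq_nonneg a])

end Variance

theorem ENNReal.tsum_subtype_le_tsum_subtype {X : Type*} {p : X → Prop} {N : Set X}
    {f : X → ℝ≥0∞} (hf : ∀ x, p x → x ∉ N → f x = 0) :
    ∑' x : {x // p x}, f x ≤ ∑' x : N, f x := by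
  rw [tsum_subtype N f, show ∑' x : {x // p x}, f x = ∑' x, {x | p x}.indicator f x from
    tsum_subtype {x | p x} f]
  refine ENNReal.tsum_le_tsum fun x => ?_
  by_cases hx : p x <;> by_cases hxN : x ∈ N <;> simp [indicator, hx, hxN, hf]

section Atoms

variable {ν : Ω → Measure (ℝ × ℝ)} {W : ℝ → ℝ → Ω → ℝ} {t : ℝ} {ω : Ω}

theorem hatNuMeasure_univ : hatNuMeasure ν t ω univ = hatNu ν t ω := by
  rw [hatNuMeasure, Measure.map_apply measurable_snd MeasurableSet.univ, preimage_univ,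
    Measure.restrict_apply_univ, hatNu]

theorem hatW_eq_zero_of_hatNu_eq_zero (h : hatNu ν t ω = 0) : hatW ν W t ω = 0 := by
  rw [hatW, Measure.measure_univ_eq_zero.1 (hatNuMeasure_univ.trans h), integral_zero_measure]

theorem ite_hatNu_pos_hatW :
    (if 0 < hatNu ν t ω then hatW ν W t ω else 0) = hatW ν W t ω := by
  split_ifs with h
  · rfl
  · exact (hatW_eq_zero_of_hatNu_eq_zero (nonpos_iff_eq_zero.1 (not_lt.1 h))).symm

theorem hatW_eq_zero_of_setLIntegral_sq_eq_zero (hW : Measurable fun e => W t e ω)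
    (h : ∫⁻ p in {t} ×ˢ univ, ENNReal.ofReal (W p.1 p.2 ω ^ 2) ∂ν ω = 0) :
    hatW ν W t ω = 0 := by
  have hW2 : Measurable fun e => ENNReal.ofReal (W t e ω ^ 2) := (hW.pow_const 2).ennreal_ofReal
  rw [setLIntegral_singleton_prod_univ (ν ω) (f := fun p => ENNReal.ofReal (W p.1 p.2 ω ^ 2)) t
    hW2, lintegral_eq_zero_iff hW2] at h
  refine integral_eq_zero_of_ae (h.mono fun e he => ?_)
  simpa using he

theorem setLIntegral_slice_sub_hatW_sq_add_le (hν1 : hatNu ν t ω ≤ 1)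
    (hW : Measurable fun e => W t e ω) :
    ∫⁻ p in {t} ×ˢ univ, ENNReal.ofReal ((W p.1 p.2 ω - hatW ν W p.1 ω) ^ 2) ∂ν ω
        + (1 - hatNu ν t ω) * ENNReal.ofReal (hatW ν W t ω ^ 2)
      ≤ ∫⁻ p in {t} ×ˢ univ, ENNReal.ofReal (W p.1 p.2 ω ^ 2) ∂ν ω := by
  have : IsFiniteMeasure (((ν ω).restrict ({t} ×ˢ univ)).map Prod.snd) :=
    (⟨by rw [hatNuMeasure_univ]; exact hν1.trans_lt ENNReal.one_lt_top⟩ :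
      IsFiniteMeasure (hatNuMeasure ν t ω))
  rw [setLIntegral_singleton_prod_univ (ν ω)
      (f := fun p => ENNReal.ofReal ((W p.1 p.2 ω - hatW ν W p.1 ω) ^ 2)) t
      ((hW.sub_const (hatW ν W t ω)).pow_const 2).ennreal_ofReal,
    setLIntegral_singleton_prod_univ (ν ω) (f := fun p => ENNReal.ofReal (W p.1 p.2 ω ^ 2)) t
      (hW.pow_const 2).ennreal_ofReal, ← hatNuMeasure_univ]
  exact lintegral_sub_integral_sq_add_le (hatNuMeasure_univ ▸ hν1) hW.aestronglyMeasurable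

end Atoms

theorem CW_le_setLIntegral_sq {ν : Ω → Measure (ℝ × ℝ)} {W : ℝ → ℝ → Ω → ℝ} {T' : ℝ} {ω : Ω}
    (hν1 : ∀ t, hatNu ν t ω ≤ 1) (hW : Measurable fun p : ℝ × ℝ => W p.1 p.2 ω) :
    CW ν W T' ω ≤ ∫⁻ p in Ioc 0 T' ×ˢ univ, ENNReal.ofReal (W p.1 p.2 ω ^ 2) ∂ν ω := by
  set sq : ℝ × ℝ → ℝ≥0∞ := fun p => ENNReal.ofReal (W p.1 p.2 ω ^ 2)
  set sqCentered : ℝ × ℝ → ℝ≥0∞ := fun p => ENNReal.ofReal ((W p.1 p.2 ω - hatW ν W p.1 ω) ^ 2)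
  set jump : ℝ → ℝ≥0∞ := fun t => (1 - hatNu ν t ω) * ENNReal.ofReal (hatW ν W t ω ^ 2)
  obtain hI | hI := eq_or_ne (∫⁻ p in Ioc 0 T' ×ˢ univ, sq p ∂ν ω) ⊤
  · exact hI ▸ le_top
  have hWt : ∀ t, Measurable fun e => W t e ω := fun t => hW.comp measurable_prodMk_left
  set N := {t ∈ Ioc 0 T' | hatW ν W t ω ≠ 0}
  have hNs : N ⊆ Ioc 0 T' := sep_subset _ _
  have hN : N.Countable := by
    refine (countable_setOf_setLIntegral_singleton_prod_univ_ne_zero (ν ω) sq hI).mono ?_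
    rintro t ⟨ht, hW0⟩
    exact ⟨ht, mt (hatW_eq_zero_of_setLIntegral_sq_eq_zero (hWt t)) hW0⟩
  have hoff : ∫⁻ p in (Ioc 0 T' \ N) ×ˢ univ, sqCentered p ∂ν ω
      = ∫⁻ p in (Ioc 0 T' \ N) ×ˢ univ, sq p ∂ν ω := by
    refine setLIntegral_congr_fun ((measurableSet_Ioc.diff hN.measurableSet).prod
      MeasurableSet.univ) fun p ⟨⟨hp, hpN⟩, _⟩ => ?_
    simp only [sqCentered, sq, not_not.1 (fun h => hpN ⟨hp, h⟩), sub_zero]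
  have hjumps : ∑' s : {s // s ∈ Ioc 0 T' ∧ 0 < hatNu ν s ω ∧ hatNu ν s ω ≠ 1}, jump s
      ≤ ∑' t : N, jump t :=
    ENNReal.tsum_subtype_le_tsum_subtype fun s ⟨hs, _⟩ hsN => by
      simp [jump, not_not.1 (fun h => hsN ⟨hs, h⟩)]
  calc CW ν W T' ω
      = ∫⁻ p in Ioc 0 T' ×ˢ univ, sqCentered p ∂ν ω
          + ∑' s : {s // s ∈ Ioc 0 T' ∧ 0 < hatNu ν s ω ∧ hatNu ν s ω ≠ 1}, jump s := by
        simp only [CW, ite_hatNu_pos_hatW]; rfl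
    _ ≤ (∑' t : N, ∫⁻ p in {(t : ℝ)} ×ˢ univ, sqCentered p ∂ν ω)
          + ∫⁻ p in (Ioc 0 T' \ N) ×ˢ univ, sqCentered p ∂ν ω + ∑' t : N, jump t := by
        rw [setLIntegral_prod_univ_eq_tsum_add (ν ω) sqCentered measurableSet_Ioc hN hNs]
        exact add_le_add le_rfl hjumps
    _ = (∑' t : N, (∫⁻ p in {(t : ℝ)} ×ˢ univ, sqCentered p ∂ν ω + jump t))
          + ∫⁻ p in (Ioc 0 T' \ N) ×ˢ univ, sq p ∂ν ω := by
        rw [ENNReal.tsum_add, hoff]; ring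
    _ ≤ (∑' t : N, ∫⁻ p in {(t : ℝ)} ×ˢ univ, sq p ∂ν ω)
          + ∫⁻ p in (Ioc 0 T' \ N) ×ˢ univ, sq p ∂ν ω := by
        gcongr with t
        exact setLIntegral_slice_sub_hatW_sq_add_le (hν1 t) (hWt t)
    _ = ∫⁻ p in Ioc 0 T' ×ˢ univ, sq p ∂ν ω :=
        (setLIntegral_prod_univ_eq_tsum_add (ν ω) sq measurableSet_Ioc hN hNs).symm

theorem L2_subset_G2_with_norm_inequality_general
    {m : MeasurableSpace Ω} (F : Filtration ℝ m) (P : Measure Ω)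
    (ν : Ω → Measure (ℝ × ℝ)) (T' : ℝ)
    (hν1 : ∀ ω t, hatNu ν t ω ≤ 1)
    (W : ℝ → ℝ → Ω → ℝ) (hWpred : PredictableField F W)
    (hL2 : L2normSq ν W T' P ≠ ⊤) :
    (∫⁻ ω, CW ν W T' ω ∂P) ≤ L2normSq ν W T' P ∧ (∫⁻ ω, CW ν W T' ω ∂P) ≠ ⊤ := by
  have hle : (∫⁻ ω, CW ν W T' ω ∂P) ≤ L2normSq ν W T' P :=
    lintegral_mono fun ω => CW_le_setLIntegral_sq (hν1 ω) (hWpred.measurable_section ω)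
  exact ⟨hle, ne_top_of_le_ne_top hL2 hle⟩

/-- `L²(μ) ⊆ G²(μ)` with `‖W‖²_{G²(μ)} = E[C(W)_{T'}] ≤ ‖W‖²_{L²(μ)}`. -/
theorem L2_subset_G2_with_norm_inequality
    {m : MeasurableSpace Ω} (F : Filtration ℝ m) (P : Measure Ω) [IsProbabilityMeasure P]
    (ν : Ω → Measure (ℝ × ℝ)) (T' : ℝ) (hT' : 0 < T')
    (hν1 : ∀ ω t, hatNu ν t ω ≤ 1)
    (W : ℝ → ℝ → Ω → ℝ) (hWpred : PredictableField F W)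
    (hL2 : L2normSq ν W T' P ≠ ⊤) :
    (∫⁻ ω, CW ν W T' ω ∂P) ≤ L2normSq ν W T' P ∧ (∫⁻ ω, CW ν W T' ω ∂P) ≠ ⊤ :=
  L2_subset_G2_with_norm_inequality_general F P ν T' hν1 W hWpred hL2
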